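/- Let ψ : T → (0,∞) be C² and solve ψ'' + ξψ = ζψ on the torus, with ξ continuous. Let Ξ be a primitive of ξ. Then max_x log ψ(x) - min_x log ψ(x) ≤ ‖(log ψ)'‖_∞ ≤ C(|ζ| + ‖Ξ‖_∞ + 1) for a constant C depending only on the torus. -/

import Mathlib

open Real Set Function

/-!
Write `g = ψ'/ψ = (log ψ)'`. The equation turns into the Riccati equation `g' = ζ - ξ - g²`,
so `g + Ξ - ζ x` is nonincreasing. Since `g` is 1-periodic and vanishes somewhere in `[0, 1]`
(Rolle for the periodic `log ψ`), comparing this monotone function at `0`, at that zero, at `x`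
and at `1` gives `|g| ≤ 4 (sup_{[0,1]} |Ξ| + |ζ|)`. The oscillation of `log ψ` over a period is
at most `sup |g|` by the mean value theorem.
-/

theorem le_biSup_of_bddAbove_image {α β : Type*} [ConditionallyCompleteLattice α] {f : β → α}
    {s : Set β} (hf : BddAbove (f '' s)) {x : β} (hx : x ∈ s) : f x ≤ ⨆ y ∈ s, f y :=
  le_ciSup₂ (f := fun y (_ : y ∈ s) => f y)
    (hf.mono <| iUnion_subset fun _ => range_subset_iff.2 fun hy => mem_image_of_mem f hy) x hx

namespace Function.Periodic

theorem deriv {𝕜 F : Type*} [NontriviallyNormedField 𝕜] [NormedAddCommGroup F] [NormedSpace 𝕜 F]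
    {f : 𝕜 → F} {c : 𝕜} (h : Periodic f c) : Periodic (_root_.deriv f) c := fun x => by
  rw [← deriv_comp_add_const, h.funext]

variable {f : ℝ → ℝ} {c : ℝ}

theorem exists_mem_Ioo_deriv_eq_zero (h : Periodic f c) (hc : 0 < c) (hf : Continuous f) :
    ∃ x ∈ Ioo 0 c, _root_.deriv f x = 0 :=
  exists_deriv_eq_zero hc hf.continuousOn (by simpa using (h 0).symm)

theorem iSup_sub_iInf_le (h : Periodic f c) (hc : 0 < c) (hf : Differentiable ℝ f) {K : ℝ}
    (hK : ∀ x, |_root_.deriv f x| ≤ K) : (⨆ x, f x) - (⨅ x, f x) ≤ K * c := by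
  have hne : (Icc 0 c).Nonempty := nonempty_Icc.2 hc.le
  obtain ⟨a, ha, hmax⟩ := isCompact_Icc.exists_isMaxOn hne hf.continuous.continuousOn
  obtain ⟨b, hb, hmin⟩ := isCompact_Icc.exists_isMinOn hne hf.continuous.continuousOn
  have hsup : (⨆ x, f x) ≤ f a := ciSup_le fun x => by
    obtain ⟨y, hy, hxy⟩ := h.exists_mem_Ico₀ hc x
    exact hxy ▸ hmax (Ico_subset_Icc_self hy)
  have hinf : f b ≤ ⨅ x, f x := le_ciInf fun x => by
    obtain ⟨y, hy, hxy⟩ := h.exists_mem_Ico₀ hc x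
    exact hxy ▸ hmin (Ico_subset_Icc_self hy)
  have hlip : |f a - f b| ≤ K * |a - b| := by
    simpa only [Real.norm_eq_abs] using convex_univ.norm_image_sub_le_of_norm_deriv_le
      (fun x _ => hf x) (fun x _ => hK x) (mem_univ b) (mem_univ a)
  have hab : |a - b| ≤ c := abs_sub_le_iff.2 ⟨by linarith [ha.2, hb.1], by linarith [ha.1, hb.2]⟩
  have hK0 : 0 ≤ K := (abs_nonneg _).trans (hK 0)
  calc (⨆ x, f x) - (⨅ x, f x) ≤ f a - f b := by linarith
    _ ≤ K * |a - b| := (le_abs_self _).trans hlip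
    _ ≤ K * c := mul_le_mul_of_nonneg_left hab hK0

theorem abs_le_of_antitone_add {g h : ℝ → ℝ} (hg : Periodic g c) (hc : 0 < c)
    (hw : Antitone fun x => g x + h x) {x₀ : ℝ} (hx₀ : x₀ ∈ Icc 0 c) (hzero : g x₀ = 0) {M : ℝ}
    (hM : ∀ y ∈ Icc 0 c, |h y| ≤ M) (x : ℝ) : |g x| ≤ 4 * M := by
  obtain ⟨y, hy, hxy⟩ := hg.exists_mem_Ico₀ hc x
  rw [hxy]
  have hy : y ∈ Icc 0 c := Ico_subset_Icc_self hy
  have h0 : (0 : ℝ) ∈ Icc 0 c := left_mem_Icc.2 hc.le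
  have hc' : c ∈ Icc 0 c := right_mem_Icc.2 hc.le
  have hgc : g c = g 0 := by simpa using hg 0
  -- comparing with the zero `x₀` bounds `g 0 = g c`, then comparing with `0` and `c` bounds `g y`
  have hw : ∀ {s t}, s ≤ t → g t + h t ≤ g s + h s := fun hst => hw hst
  have hg0_le : g 0 ≤ h x₀ - h c := by linarith [hw hx₀.2]
  have le_hg0 : h x₀ - h 0 ≤ g 0 := by linarith [hw hx₀.1]
  have := abs_le.1 (hM y hy); have := abs_le.1 (hM 0 h0)
  have := abs_le.1 (hM c hc'); have := abs_le.1 (hM x₀ hx₀)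
  rw [abs_le]
  constructor <;> linarith [hw hy.1, hw hy.2]

end Function.Periodic

theorem hasDerivAt_logDeriv_of_hill {ψ ξ : ℝ → ℝ} {ζ x : ℝ} (hψ : Differentiable ℝ ψ)
    (hψ' : DifferentiableAt ℝ (deriv ψ) x) (hψ0 : ψ x ≠ 0)
    (hill : deriv (deriv ψ) x + ξ x * ψ x = ζ * ψ x) :
    HasDerivAt (logDeriv ψ) (ζ - ξ x - logDeriv ψ x ^ 2) x := by
  refine (hψ'.hasDerivAt.div (hψ x).hasDerivAt hψ0).congr_deriv ?_
  rw [logDeriv_apply, eq_sub_of_add_eq hill]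
  field_simp

theorem antitone_add_primitive_of_riccati {g ξ Ξ : ℝ → ℝ} {ζ : ℝ}
    (hg : ∀ x, HasDerivAt g (ζ - ξ x - g x ^ 2) x) (hΞ : ∀ x, HasDerivAt Ξ (ξ x) x) :
    Antitone fun x => g x + (Ξ x - ζ * x) := by
  have hd : ∀ x, HasDerivAt (fun x => g x + (Ξ x - ζ * x)) (-g x ^ 2) x := fun x =>
    ((hg x).add ((hΞ x).sub ((hasDerivAt_id x).const_mul ζ))).congr_deriv (by ring)
  exact antitone_of_deriv_nonpos (fun x => (hd x).differentiableAt)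
    fun x => (hd x).deriv ▸ neg_nonpos.2 (sq_nonneg _)

/-- Oscillation bound on the logarithm of a positive periodic eigenfunction of
`Δ + ξ` in terms of the eigenvalue and a primitive `Ξ` of `ξ`. -/
theorem stmt6 :
    ∃ C > 0, ∀ (ξ ψ Ξ : ℝ → ℝ) (ζ : ℝ),
      Continuous ξ → Function.Periodic ξ 1 →
      Function.Periodic ψ 1 → ContDiff ℝ 2 ψ → (∀ x, 0 < ψ x) →
      (∀ x, deriv (deriv ψ) x + ξ x * ψ x = ζ * ψ x) →
      (∀ x, HasDerivAt Ξ (ξ x) x) →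
      ((⨆ x, Real.log (ψ x)) - (⨅ x, Real.log (ψ x))
          ≤ ⨆ x, |deriv (fun y => Real.log (ψ y)) x|) ∧
      (⨆ x, |deriv (fun y => Real.log (ψ y)) x|)
          ≤ C * (|ζ| + (⨆ x ∈ Set.Icc (0:ℝ) 1, |Ξ x|) + 1) := by
  refine ⟨4, by norm_num, fun ξ ψ Ξ ζ _ _ hψp hψ2 hψ0 hill hΞ => ?_⟩
  set v : ℝ → ℝ := fun y => Real.log (ψ y)
  set B := ⨆ x ∈ Icc (0:ℝ) 1, |Ξ x|
  have hψd : Differentiable ℝ ψ := hψ2.differentiable (by norm_num)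
  have hvd : Differentiable ℝ v := hψd.log fun x => (hψ0 x).ne'
  have hvp : Periodic v 1 := fun x => congrArg Real.log (hψp x)
  have hdv : deriv v = logDeriv ψ :=
    funext fun x => Real.deriv_log_comp_eq_logDeriv (hψd x) (hψ0 x).ne'
  obtain ⟨x₀, hx₀, hzero⟩ := hvp.exists_mem_Ioo_deriv_eq_zero one_pos hvd.continuous
  have hΞc : Continuous Ξ := continuous_iff_continuousAt.2 fun x => (hΞ x).continuousAt
  have hΞB : ∀ y ∈ Icc (0:ℝ) 1, |Ξ y| ≤ B := fun y hy => le_biSup_of_bddAbove_image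
    (f := fun x => |Ξ x|) (isCompact_Icc.image hΞc.abs).bddAbove hy
  have hbound : ∀ y ∈ Icc (0:ℝ) 1, |Ξ y - ζ * y| ≤ B + |ζ| := fun y hy => by
    have : |ζ * y| ≤ |ζ| := by
      rw [abs_mul, abs_of_nonneg hy.1]; exact mul_le_of_le_one_right (abs_nonneg ζ) hy.2
    linarith [abs_sub (Ξ y) (ζ * y), hΞB y hy]
  have hK : ∀ x, |deriv v x| ≤ 4 * (B + |ζ|) := by
    rw [hdv]
    refine (hdv ▸ hvp.deriv).abs_le_of_antitone_add one_pos
      (antitone_add_primitive_of_riccati (fun x => hasDerivAt_logDeriv_of_hill hψd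
        (hψ2.differentiable_deriv_two x) (hψ0 x).ne' (hill x)) hΞ)
      (Ioo_subset_Icc_self hx₀) (hdv ▸ hzero) hbound
  have hbdd : BddAbove (range fun x => |deriv v x|) := ⟨_, forall_mem_range.2 hK⟩
  refine ⟨by simpa using hvp.iSup_sub_iInf_le one_pos hvd fun x => le_ciSup hbdd x, ?_⟩
  calc ⨆ x, |deriv v x| ≤ 4 * (B + |ζ|) := ciSup_le hK
    _ ≤ 4 * (|ζ| + B + 1) := by linarith
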